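/- The main method of the Hairer–Wanner embedded SDIRK scheme is A-stable: for every z ∈ ℂ with Re z ≤ 0, the matrix I − zA is invertible and the stability function R(z) = 1 + z · γ₁ᵀ (I − zA)⁻¹ 𝟙, where 𝟙 = (1,1,1,1,1)ᵀ, satisfies |R(z)| ≤ 1. -/

import Mathlib

/-!
Solving the triangular stage system gives `R(z) = 4 p(z) / (3 (4 - z)⁵)` with
`p(z) = 768 - 192 z - 96 z² + 8 z³ + 7 z⁴`, whose only pole `z = 4` lies in the right half-plane.
Writing `z = -s + i y` with `s ≥ 0`, the difference `9 |4 - z|¹⁰ - 16 |p(z)|²` is a polynomial in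
`s` and `y²` whose coefficients are all nonnegative except for its `s⁰` part, the E-polynomial
`y⁶ (9 y⁴ - 64 y² + 512)`, which is nonnegative because `9 t² - 64 t + 512` has negative
discriminant.
-/

open Matrix
noncomputable def hwA : Matrix (Fin 5) (Fin 5) ℂ :=
  !![1/4, 0, 0, 0, 0;
     1/2, 1/4, 0, 0, 0;
     17/50, -1/25, 1/4, 0, 0;
     371/1360, -137/2720, 15/544, 1/4, 0;
     25/24, -49/48, 125/16, -85/12, 1/4]

noncomputable def hwγ₁ : Fin 5 → ℂ := ![25/24, -49/48, 125/16, -85/12, 1/4]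

namespace Matrix

variable {m R : Type*} [Fintype m] [DecidableEq m]

theorem det_one_sub_smul_of_isLowerTriangular [LinearOrder m] [CommRing R] {A : Matrix m m R}
    (hA : A.IsLowerTriangular) (z : R) : (1 - z • A).det = ∏ i, (1 - z * A i i) := by
  rw [det_of_isLowerTriangular _ (blockTriangular_one.sub fun i j h => by simp [hA h])]
  simp

end Matrix

section StabilityFunction

variable {n 𝕜 : Type*} [Fintype n] [DecidableEq n]

noncomputable def stabilityFunction [CommRing 𝕜] (A : Matrix n n 𝕜) (b : n → 𝕜) (z : 𝕜) : 𝕜 :=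
  1 + z * (b ⬝ᵥ ((1 - z • A)⁻¹ *ᵥ fun _ => 1))

theorem stabilityFunction_eq_of_mulVec_eq [Field 𝕜] {A : Matrix n n 𝕜} {z d : 𝕜} {r : n → 𝕜}
    (b : n → 𝕜) (hA : IsUnit (1 - z • A).det) (hd : d ≠ 0) (hr : (1 - z • A) *ᵥ r = fun _ => d) :
    stabilityFunction A b z = 1 + z * (b ⬝ᵥ r) / d := by
  have hsol : (1 - z • A)⁻¹ *ᵥ (fun _ => 1) = d⁻¹ • r := by
    have hr' : (1 - z • A) *ᵥ (d⁻¹ • r) = fun _ => 1 := by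
      rw [mulVec_smul, hr]
      funext
      simp [hd]
    rw [← hr', mulVec_mulVec, nonsing_inv_mul _ hA, one_mulVec]
  rw [stabilityFunction, hsol, dotProduct_smul, smul_eq_mul]
  ring

end StabilityFunction

theorem hwA_isLowerTriangular : hwA.IsLowerTriangular := by
  intro i j (hij : i < j)
  fin_cases i <;> fin_cases j <;> simp_all [hwA]

theorem hw_det_one_sub_smul (z : ℂ) : (1 - z • hwA).det = (1 - z / 4) ^ 5 := by
  rw [det_one_sub_smul_of_isLowerTriangular hwA_isLowerTriangular]
  simp only [hwA, one_div, of_apply, cons_val', cons_val_fin_one, Fin.prod_univ_five, Fin.isValue,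
    cons_val_zero, cons_val_one, cons_val]
  ring

theorem hw_isUnit_det_one_sub_smul {z : ℂ} (hz : z ≠ 4) : IsUnit (1 - z • hwA).det := by
  rw [hw_det_one_sub_smul]
  refine (pow_ne_zero _ fun h => hz ?_).isUnit
  linear_combination -4 * h

noncomputable def hwStabilityNum (z : ℂ) : ℂ :=
  768 - 192 * z - 96 * z ^ 2 + 8 * z ^ 3 + 7 * z ^ 4

theorem hw_stabilityFunction_eq {z : ℂ} (hz : z ≠ 4) :
    stabilityFunction hwA hwγ₁ z = 4 * hwStabilityNum z / (3 * (4 - z) ^ 5) := by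
  have hd : (4 - z) ^ 5 ≠ 0 := pow_ne_zero _ (sub_ne_zero.2 hz.symm)
  -- `r = (4 - z)⁵ (1 - z • hwA)⁻¹ 𝟙`, found by forward substitution
  let r : Fin 5 → ℂ :=
    ![1024 - 1024*z + 384*z^2 - 64*z^3 + 4*z^4,
      1024 - 512*z + 32*z^3 - 4*z^4,
      1024 - 3584/5*z + 3328/25*z^2 + 96/25*z^3 - 52/25*z^4,
      1024 - 768*z + 14848/85*z^2 - 672/85*z^3 - 16/17*z^4,
      1024 - 256*z - 128*z^2 + 32/3*z^3 + 28/3*z^4]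
  have hr : (1 - z • hwA) *ᵥ r = fun _ => (4 - z) ^ 5 := by
    funext i
    fin_cases i <;> simp [r, hwA, mulVec, dotProduct, Fin.sum_univ_five, one_apply] <;> ring
  rw [stabilityFunction_eq_of_mulVec_eq hwγ₁ (hw_isUnit_det_one_sub_smul hz) hd hr]
  simp only [dotProduct, hwγ₁, one_div, Fin.sum_univ_five, Fin.isValue, cons_val_zero, cons_val_one,
    cons_val, hwStabilityNum, r]
  field_simp
  ring

theorem hw_normSq_stabilityNum (z : ℂ) :
    Complex.normSq (hwStabilityNum z) =
      (768 + 96*z.im^2 + 7*z.im^4 - 192*z.re - 24*z.re*z.im^2 - 96*z.re^2 - 42*z.re^2*z.im^2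
        + 8*z.re^3 + 7*z.re^4)^2
      + (-192*z.im - 8*z.im^3 - 192*z.re*z.im - 28*z.re*z.im^3 + 24*z.re^2*z.im
        + 28*z.re^3*z.im)^2 := by
  simp only [hwStabilityNum, pow_succ, pow_zero, one_mul, Complex.normSq_apply, Complex.add_re,
    Complex.sub_re, Complex.re_ofNat, Complex.mul_re, Complex.im_ofNat, zero_mul, sub_zero,
    Complex.mul_im, Complex.add_im, Complex.sub_im, add_zero, zero_sub, neg_mul]
  ring

theorem hw_num_sq_le_den_sq (x y : ℝ) (hx : x ≤ 0) :
    16 * ((768 + 96*y^2 + 7*y^4 - 192*x - 24*x*y^2 - 96*x^2 - 42*x^2*y^2 + 8*x^3 + 7*x^4)^2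
      + (-192*y - 8*y^3 - 192*x*y - 28*x*y^3 + 24*x^2*y + 28*x^3*y)^2)
    ≤ 9 * ((4 - x)^2 + y^2)^5 := by
  obtain ⟨s, hs, rfl⟩ : ∃ s, 0 ≤ s ∧ x = -s := ⟨-x, by linarith, by ring⟩
  have hE : 0 ≤ y ^ 6 * (9 * y ^ 4 - 64 * y ^ 2 + 512) := by
    have : 0 ≤ 9 * y ^ 4 - 64 * y ^ 2 + 512 := by nlinarith [sq_nonneg (3 * y ^ 2 - 32 / 3)]
    positivity
  have hrest : 0 ≤
      s * (18874368 + 5898240*y^2 + 657408*y^4 + 24832*y^6 + 360*y^8) +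
      s^2 * (28311552 + 5898240*y^2 + 321024*y^4 + 5504*y^6 + 45*y^8) +
      s^3 * (18481152 + 2617344*y^2 + 120576*y^4 + 1440*y^6) +
      s^4 * (7471104 + 824832*y^2 + 16896*y^4 + 90*y^6) +
      s^5 * (2254848 + 166656*y^2 + 2160*y^4) +
      s^6 * (504320 + 17024*y^2 + 90*y^4) +
      s^7 * (70912 + 1440*y^2) + s^8 * (5696 + 45*y^2) + 360 * s^9 + 9 * s^10 := by
    positivity
  linear_combination hE + hrest

theorem norm_hw_stabilityFunction_le {z : ℂ} (hz : z.re ≤ 0) :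
    ‖4 * hwStabilityNum z / (3 * (4 - z) ^ 5)‖ ≤ 1 := by
  have h4z : Complex.normSq (4 - z) = (4 - z.re) ^ 2 + z.im ^ 2 := by
    simp only [Complex.normSq_apply, Complex.sub_re, Complex.re_ofNat, Complex.sub_im,
      Complex.im_ofNat, zero_sub, mul_neg, neg_mul, neg_neg]
    ring
  have hden : 0 < Complex.normSq (3 * (4 - z) ^ 5) := by
    have : 0 < 4 - z.re := by linarith
    simp only [map_mul, map_pow, h4z]
    norm_num
    positivity
  rw [← sq_le_one_iff₀ (norm_nonneg _), Complex.sq_norm, Complex.normSq_div, div_le_one hden]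
  simp only [map_mul, map_pow, hw_normSq_stabilityNum, h4z]
  norm_num
  linarith [hw_num_sq_le_den_sq z.re z.im hz]

theorem hw_A_stable :
    ∀ z : ℂ, z.re ≤ 0 →
      IsUnit (1 - z • hwA) ∧
      ‖1 + z * (hwγ₁ ⬝ᵥ ((1 - z • hwA)⁻¹ *ᵥ fun _ => 1))‖ ≤ 1 := by
  intro z hz
  have hz4 : z ≠ 4 := by
    rintro rfl
    norm_num at hz
  refine ⟨(isUnit_iff_isUnit_det _).2 (hw_isUnit_det_one_sub_smul hz4), ?_⟩
  change ‖stabilityFunction hwA hwγ₁ z‖ ≤ 1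
  rw [hw_stabilityFunction_eq hz4]
  exact norm_hw_stabilityFunction_le hz
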